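/- arXiv:1605.00450 — 4 statements merged into one kernel-verified Lean document; each statement's English description precedes it below -/
import Mathlib

section
/- Let n, k, b be integers with 1 ≤ k-1 ≤ b ≤ n, b ≥ k, and let 0 ≤ i < j ≤ n-(k-1). Then the graph distance in G_{n,k,b} between the vertices {i, i+1, ..., i+k-1} and {j, j+1, ..., j+k-1} equals ⌈(j-i)/(b-k+1)⌉. -/
/-- The maximum element of a finite set of naturals (`0` for the empty set). -/
def fmax (X : Finset ℕ) : ℕ := WithBot.unbotD 0 X.max

/-- The minimum element of a finite set of naturals (`0` for the empty set). -/
def fmin (X : Finset ℕ) : ℕ := WithTop.untopD 0 X.min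

/-- The vertex set `V_{n,k,b}`: all `k`-element subsets `X` of `{0,…,n}`
with `max X - min X ≤ b`. -/
def Vnkb (n k b : ℕ) : Finset (Finset ℕ) :=
  ((Finset.range (n + 1)).powersetCard k).filter (fun X => fmax X - fmin X ≤ b)

/-- The graph `G_{n,k,b}`: two distinct vertices `X, Y` are adjacent iff
`max (X ∪ Y) - min (X ∪ Y) ≤ b`. -/
def Gnkb (n k b : ℕ) : SimpleGraph (Vnkb n k b) where
  Adj X Y := X ≠ Y ∧ fmax (X.1 ∪ Y.1) - fmin (X.1 ∪ Y.1) ≤ b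
  symm := by
    constructor
    rintro X Y ⟨h1, h2⟩
    exact ⟨h1.symm, by rwa [Finset.union_comm]⟩
  loopless := by constructor; rintro X ⟨h1, -⟩; exact h1 rfl

/-- The bandwidth of a finite graph: the minimum over all bijective labellings of the
vertices by `{0, …, |V|-1}` (equivalently `{1, …, |V|}`) of the maximal absolute
label difference along an edge. -/
noncomputable def bandwidth {V : Type*} [Fintype V] (G : SimpleGraph V) : ℕ :=
  sInf {m : ℕ | ∃ f : V ≃ Fin (Fintype.card V),
    ∀ u v : V, G.Adj u v → (((f u : ℕ) : ℤ) - ((f v : ℕ) : ℤ)).natAbs ≤ m}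

/-!
Write `s = b - (k - 1)`. Every vertex spans at least `k - 1`, so along an edge `X ~ Y` the
minimum can grow by at most `s`: `min Y + (k - 1) ≤ max (X ∪ Y) ≤ min X + b`. Hence a walk from
`[i, i + k - 1]` to `[j, j + k - 1]` has at least `⌈(j - i) / s⌉` edges, and this is attained by
shifting the interval `s` steps at a time.
-/

open Finset

lemma fmax_eq_max' {X : Finset ℕ} (h : X.Nonempty) : fmax X = X.max' h := by
  rw [fmax, ← coe_max' h]; rfl

lemma fmin_eq_min' {X : Finset ℕ} (h : X.Nonempty) : fmin X = X.min' h := by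
  rw [fmin, ← coe_min' h]; rfl

lemma fmax_Icc {a c : ℕ} (h : a ≤ c) : fmax (Icc a c) = c := by
  rw [fmax_eq_max' (nonempty_Icc.mpr h)]
  exact le_antisymm (max'_le _ _ _ fun y hy => (mem_Icc.mp hy).2)
    (le_max' _ c (mem_Icc.mpr ⟨h, le_rfl⟩))

lemma fmin_Icc {a c : ℕ} (h : a ≤ c) : fmin (Icc a c) = a := by
  rw [fmin_eq_min' (nonempty_Icc.mpr h)]
  exact le_antisymm (min'_le _ a (mem_Icc.mpr ⟨le_rfl, h⟩))
    (le_min' _ _ _ fun y hy => (mem_Icc.mp hy).1)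

lemma fmax_union {X Y : Finset ℕ} (hX : X.Nonempty) (hY : Y.Nonempty) :
    fmax (X ∪ Y) = max (fmax X) (fmax Y) := by
  rw [fmax_eq_max' (hX.mono subset_union_left), fmax_eq_max' hX, fmax_eq_max' hY,
    max'_union hX hY]

lemma fmin_union {X Y : Finset ℕ} (hX : X.Nonempty) (hY : Y.Nonempty) :
    fmin (X ∪ Y) = min (fmin X) (fmin Y) := by
  rw [fmin_eq_min' (hX.mono subset_union_left), fmin_eq_min' hX, fmin_eq_min' hY,
    min'_union hX hY]

lemma subset_Icc_fmin_fmax (X : Finset ℕ) : X ⊆ Icc (fmin X) (fmax X) := by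
  intro x hx
  have hX : X.Nonempty := ⟨x, hx⟩
  rw [mem_Icc, fmin_eq_min' hX, fmax_eq_max' hX]
  exact ⟨min'_le _ _ hx, le_max' _ _ hx⟩

section Gnkb

variable {n k b : ℕ}

lemma card_of_mem_Vnkb {X : Finset ℕ} (hX : X ∈ Vnkb n k b) : X.card = k :=
  (mem_powersetCard.mp (mem_filter.mp hX).1).2

lemma fmin_add_le_fmax_of_mem_Vnkb (hk : 1 ≤ k) {X : Finset ℕ} (hX : X ∈ Vnkb n k b) :
    fmin X + (k - 1) ≤ fmax X := by
  have := card_le_card (subset_Icc_fmin_fmax X)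
  rw [card_of_mem_Vnkb hX, Nat.card_Icc] at this
  omega

lemma Icc_mem_Vnkb {t : ℕ} (hk : 1 ≤ k) (hkb : k - 1 ≤ b) (ht : t + (k - 1) ≤ n) :
    Icc t (t + (k - 1)) ∈ Vnkb n k b := by
  refine mem_filter.mpr ⟨mem_powersetCard.mpr ⟨fun x hx => ?_, ?_⟩, ?_⟩
  · exact mem_range.mpr (by have := (mem_Icc.mp hx).2; omega)
  · rw [Nat.card_Icc]; omega
  · rw [fmax_Icc (by omega), fmin_Icc (by omega)]; omega

lemma Gnkb.fmin_le_of_adj (hk : 1 ≤ k) {X Y : Vnkb n k b} (h : (Gnkb n k b).Adj X Y) :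
    fmin Y.1 ≤ fmin X.1 + (b - (k - 1)) := by
  have hne : ∀ Z : Vnkb n k b, Z.1.Nonempty := fun Z =>
    card_pos.mp (by rw [card_of_mem_Vnkb Z.2]; omega)
  have hspan := h.2
  rw [fmax_union (hne X) (hne Y), fmin_union (hne X) (hne Y)] at hspan
  have := fmin_add_le_fmax_of_mem_Vnkb hk Y.2
  have := le_max_right (fmax X.1) (fmax Y.1)
  have := min_le_left (fmin X.1) (fmin Y.1)
  omega

lemma Gnkb.fmin_le_of_walk (hk : 1 ≤ k) {X Y : Vnkb n k b} (p : (Gnkb n k b).Walk X Y) :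
    fmin Y.1 ≤ fmin X.1 + p.length * (b - (k - 1)) := by
  induction p with
  | nil => simp
  | cons h _ ih =>
    have := Gnkb.fmin_le_of_adj hk h
    rw [SimpleGraph.Walk.length_cons, add_mul, one_mul]
    omega

lemma Gnkb.adj_of_Icc {t u : ℕ} {X Y : Vnkb n k b} (hX : X.1 = Icc t (t + (k - 1)))
    (hY : Y.1 = Icc u (u + (k - 1))) (htu : t < u) (hut : u + (k - 1) ≤ t + b) :
    (Gnkb n k b).Adj X Y := by
  refine ⟨fun hXY => ?_, ?_⟩
  · have : t ∈ Y.1 := hXY ▸ hX ▸ left_mem_Icc.mpr (Nat.le_add_right t _)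
    rw [hY, mem_Icc] at this
    omega
  · rw [hX, hY, fmax_union (nonempty_Icc.2 (by omega)) (nonempty_Icc.2 (by omega)),
      fmin_union (nonempty_Icc.2 (by omega)) (nonempty_Icc.2 (by omega)),
      fmax_Icc (by omega), fmax_Icc (by omega), fmin_Icc (by omega), fmin_Icc (by omega)]
    omega

lemma Gnkb.exists_walk_length_le (hk : 1 ≤ k) (hkb : k ≤ b) (m : ℕ) {t u : ℕ}
    {X Y : Vnkb n k b} (hX : X.1 = Icc t (t + (k - 1))) (hY : Y.1 = Icc u (u + (k - 1)))
    (hu : u + (k - 1) ≤ n) (htu : t ≤ u) (hut : u ≤ t + m * (b - (k - 1))) :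
    ∃ p : (Gnkb n k b).Walk X Y, p.length ≤ m := by
  induction m generalizing t X with
  | zero =>
    obtain rfl : X = Y := Subtype.ext (by rw [hX, hY]; congr 1 <;> omega)
    exact ⟨.nil, le_rfl⟩
  | succ m ih =>
    obtain rfl | htu := eq_or_lt_of_le htu
    · obtain rfl : X = Y := Subtype.ext (hX.trans hY.symm)
      exact ⟨.nil, by simp⟩
    by_cases hnear : u ≤ t + (b - (k - 1))
    · exact ⟨.cons (Gnkb.adj_of_Icc hX hY htu (by omega)) .nil, by simp⟩
    · let Z : Vnkb n k b := ⟨_, Icc_mem_Vnkb (t := t + (b - (k - 1))) hk (by omega) (by omega)⟩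
      obtain ⟨p, hp⟩ := ih (X := Z) rfl (by omega) (by rw [add_mul] at hut; omega)
      exact ⟨.cons (Gnkb.adj_of_Icc hX rfl (by omega) (by omega)) p, by simp [hp]⟩

end Gnkb

lemma natCeil_div_le_iff {d s m : ℕ} (hs : 0 < s) : ⌈(d : ℚ) / s⌉₊ ≤ m ↔ d ≤ m * s := by
  rw [Nat.ceil_le, div_le_iff₀ (by exact_mod_cast hs)]
  exact_mod_cast Iff.rfl

theorem dist_interval_interval_general (n k b i j : ℕ)
    (h1 : 1 ≤ k - 1) (hbk : k ≤ b)
    (hij : i < j) (hj : j ≤ n - (k - 1))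
    (X Y : Vnkb n k b)
    (hX : X.1 = Finset.Icc i (i + (k - 1))) (hY : Y.1 = Finset.Icc j (j + (k - 1))) :
    ((Gnkb n k b).dist X Y : ℤ) = ⌈((j : ℚ) - (i : ℚ)) / ((b : ℚ) - (k : ℚ) + 1)⌉ := by
  have hs : 0 < b - (k - 1) := by omega
  have hquot : ((j : ℚ) - i) / ((b : ℚ) - k + 1) =
      ((j - i : ℕ) : ℚ) / ((b - (k - 1) : ℕ) : ℚ) := by
    rw [Nat.cast_sub hij.le, Nat.cast_sub (by omega : k - 1 ≤ b), Nat.cast_sub (by omega : 1 ≤ k)]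
    ring_nf
  rw [hquot, ← Int.natCast_ceil_eq_ceil (by positivity), Nat.cast_inj]
  set m := ⌈((j - i : ℕ) : ℚ) / ((b - (k - 1) : ℕ) : ℚ)⌉₊
  have hm : j - i ≤ m * (b - (k - 1)) := (natCeil_div_le_iff hs).mp le_rfl
  obtain ⟨p, hp⟩ := Gnkb.exists_walk_length_le (by omega) hbk m hX hY (by omega) hij.le (by omega)
  obtain ⟨q, hq⟩ := p.reachable.exists_walk_length_eq_dist
  refine le_antisymm ((SimpleGraph.dist_le p).trans hp) ((natCeil_div_le_iff hs).mpr ?_)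
  have := Gnkb.fmin_le_of_walk (by omega) q
  rw [hX, hY, fmin_Icc (by omega), fmin_Icc (by omega), hq] at this
  omega

/-- For `0 ≤ i < j ≤ n-(k-1)`, the graph distance in `G_{n,k,b}` between the vertices
`{i, i+1, …, i+k-1}` and `{j, j+1, …, j+k-1}` equals `⌈(j-i)/(b-k+1)⌉`. -/
theorem dist_interval_interval (n k b i j : ℕ)
    (h1 : 1 ≤ k - 1) (h2 : k - 1 ≤ b) (h3 : b ≤ n) (hbk : k ≤ b)
    (hij : i < j) (hj : j ≤ n - (k - 1))
    (X Y : Vnkb n k b)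
    (hX : X.1 = Finset.Icc i (i + (k - 1))) (hY : Y.1 = Finset.Icc j (j + (k - 1))) :
    ((Gnkb n k b).dist X Y : ℤ) = ⌈((j : ℚ) - (i : ℚ)) / ((b : ℚ) - (k : ℚ) + 1)⌉ :=
  dist_interval_interval_general n k b i j h1 hbk hij hj X Y hX hY
end

section
/- Let k ≥ 2 be an integer and let 0 ≤ s < t ≤ 1. Let P₁ = (ξ₁, ξ₁+s), P₂ = (ξ₂, ξ₂+s) with 0 ≤ ξ₁ ≤ ξ₂ ≤ 1-s, and P₃ = (ξ₃, ξ₃+t), P₄ = (ξ₄, ξ₄+t) with 0 ≤ ξ₃ ≤ ξ₄ ≤ 1-t. Set u = ξ₂-ξ₁ and v = ξ₄-ξ₃, and let Q be the convex hull of {P₁, P₂, P₃, P₄}. Then (1/(k-2)!) ∬_Q (y-x)^{k-2} dx dy = (1/(k-2)!) · (1/(t-s)) · ( (1/k)(v-u)(t^k - s^k) + ((tu - sv)/(k-1))(t^{k-1} - s^{k-1}) ). -/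
/-!
The shear `(x, y) ↦ (y - x, x)` preserves Lebesgue measure and maps `Q` onto the convex hull of
`(s, ξ₁), (s, ξ₂), (t, ξ₃), (t, ξ₄)`, which is the region between two affine functions `g ≤ h`
over `[s, t]`, while the integrand becomes `w ^ (k - 2)`. By Fubini the integral is
`∫ w in s..t, (h - g) w * w ^ (k - 2)`, the integral of a polynomial.
-/

open MeasureTheory Set

theorem setIntegral_image_snd_sub_fst_fst {G E : Type*} [MeasurableSpace G] [AddGroup G]
    [MeasurableAdd₂ G] [MeasurableNeg G] [NormedAddCommGroup E] [NormedSpace ℝ E]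
    (μ ν : Measure G) [SFinite μ] [SFinite ν] [ν.IsAddRightInvariant]
    (S : Set (G × G)) (F : G × G → E) :
    ∫ q in (fun p : G × G => (p.2 - p.1, p.1)) '' S, F q ∂ν.prod μ =
      ∫ p in S, F (p.2 - p.1, p.1) ∂μ.prod ν :=
  (Measure.measurePreserving_swap.comp (measurePreserving_prod_sub μ ν)).setIntegral_image_emb
    ((MeasurableEquiv.shearSubRight G).trans MeasurableEquiv.prodComm).measurableEmbedding F S

theorem setIntegral_region_between_cc_fst {α E : Type*} [MeasurableSpace α] [NormedAddCommGroup E]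
    [NormedSpace ℝ E] [CompleteSpace E] {μ : Measure α} [SFinite μ] {f g : α → ℝ} {s : Set α}
    (hf : Measurable f) (hg : Measurable g) (hs : MeasurableSet s) (hfg : ∀ x ∈ s, f x ≤ g x)
    {F : α → E}
    (hF : IntegrableOn (fun p => F p.1) {p : α × ℝ | p.1 ∈ s ∧ p.2 ∈ Icc (f p.1) (g p.1)}
      (μ.prod volume)) :
    ∫ p in {p : α × ℝ | p.1 ∈ s ∧ p.2 ∈ Icc (f p.1) (g p.1)}, F p.1 ∂μ.prod volume =
      ∫ x in s, (g x - f x) • F x ∂μ := by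
  have hR := measurableSet_region_between_cc hf hg hs
  rw [← integral_indicator hR, integral_prod _ ((integrable_indicator_iff hR).2 hF),
    ← integral_indicator hs]
  congr 1 with x
  by_cases hx : x ∈ s
  · have hslice : ∀ y : ℝ, {p : α × ℝ | p.1 ∈ s ∧ p.2 ∈ Icc (f p.1) (g p.1)}.indicator
        (fun p => F p.1) (x, y) = (Icc (f x) (g x)).indicator (fun _ => F x) y := by
      intro y
      simp only [indicator, mem_ofPred_eq, hx, true_and]
    simp_rw [hslice]
    rw [integral_indicator measurableSet_Icc, setIntegral_const,
      Real.volume_real_Icc_of_le (hfg x hx), indicator_of_mem hx]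
  · simp [indicator, hx]

namespace AffineMap

variable {E : Type*} [AddCommGroup E] [Module ℝ E]

theorem exists_apply_eq_apply_eq {s t : ℝ} (hst : s ≠ t) (a c : ℝ) :
    ∃ g : ℝ →ᵃ[ℝ] ℝ, g s = a ∧ g t = c :=
  ⟨(lineMap a c).comp ((t - s)⁻¹ • (AffineMap.id ℝ ℝ - const ℝ ℝ s)),
    by simp, by simp [sub_ne_zero.2 hst.symm]⟩

theorem apply_eq_of_ne (φ : ℝ →ᵃ[ℝ] ℝ) {s t : ℝ} (hst : s ≠ t) (w : ℝ) :
    φ w = ((t - w) * φ s + (w - s) * φ t) / (t - s) := by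
  have hts : t - s ≠ 0 := sub_ne_zero.2 hst.symm
  have hw : w = lineMap s t ((w - s) / (t - s)) := by
    rw [lineMap_apply_ring']
    field_simp
    ring
  conv_lhs => rw [hw, apply_lineMap, lineMap_apply_ring']
  field_simp
  ring

theorem apply_le_apply_of_mem_segment {g h : E →ᵃ[ℝ] ℝ} {s t w : E} (hs : g s ≤ h s)
    (ht : g t ≤ h t) (hw : w ∈ segment ℝ s t) : g w ≤ h w := by
  obtain ⟨θ, ⟨hθ₀, hθ₁⟩, rfl⟩ := (segment_eq_image_lineMap ℝ s t).subset hw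
  rw [g.apply_lineMap, h.apply_lineMap]
  exact lineMap_mono_endpoints hs ht hθ₀ hθ₁

theorem mk_lineMap_mem_convexHull (φ : E →ᵃ[ℝ] ℝ) {P : Set (E × ℝ)} {s t : E}
    (hs : (s, φ s) ∈ P) (ht : (t, φ t) ∈ P) {θ : ℝ} (hθ : θ ∈ Icc (0 : ℝ) 1) :
    (lineMap s t θ, φ (lineMap s t θ)) ∈ convexHull ℝ P := by
  have hline : (lineMap s t θ, φ (lineMap s t θ)) = lineMap (s, φ s) (t, φ t) θ := by
    ext <;> simp [apply_lineMap]
  rw [hline]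
  exact segment_subset_convexHull hs ht (lineMap_mem_segment ℝ _ _ hθ)

end AffineMap

theorem convexHull_endpoints_eq_region_between_cc {E : Type*} [AddCommGroup E] [Module ℝ E]
    (s t : E) (g h : E →ᵃ[ℝ] ℝ) (hs : g s ≤ h s) (ht : g t ≤ h t) :
    convexHull ℝ {(s, g s), (s, h s), (t, g t), (t, h t)} =
      {p : E × ℝ | p.1 ∈ segment ℝ s t ∧ p.2 ∈ Icc (g p.1) (h p.1)} := by
  apply Subset.antisymm
  · have hg : ConvexOn ℝ (segment ℝ s t) g :=
      ((convexOn_id convex_univ).comp_affineMap g).subset (subset_univ _) (convex_segment s t)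
    have hh : ConcaveOn ℝ (segment ℝ s t) h :=
      ((concaveOn_id convex_univ).comp_affineMap h).subset (subset_univ _) (convex_segment s t)
    have hconv : Convex ℝ {p : E × ℝ | p.1 ∈ segment ℝ s t ∧ p.2 ∈ Icc (g p.1) (h p.1)} := by
      convert hg.convex_epigraph.inter hh.convex_hypograph using 1
      ext p
      simp only [mem_inter_iff, mem_ofPred_eq, mem_Icc]
      tauto
    refine convexHull_min ?_ hconv
    rintro p (rfl | rfl | rfl | rfl) <;> simp [left_mem_segment, right_mem_segment, hs, ht]
  · rintro ⟨w, x⟩ ⟨hw, hx⟩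
    obtain ⟨θ, hθ, rfl⟩ := (segment_eq_image_lineMap ℝ s t).subset hw
    set w := AffineMap.lineMap s t θ
    have hx' : (w, x) ∈ segment ℝ (w, g w) (w, h w) := by
      rw [← Prod.image_mk_segment_right, segment_eq_Icc (hx.1.trans hx.2)]
      exact mem_image_of_mem _ hx
    refine (convex_convexHull ℝ _).segment_subset ?_ ?_ hx'
    · exact g.mk_lineMap_mem_convexHull (by simp) (by simp) hθ
    · exact h.mk_lineMap_mem_convexHull (by simp) (by simp) hθ

theorem setIntegral_convexHull_endpoints_fst {E : Type*} [NormedAddCommGroup E]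
    [NormedSpace ℝ E] [CompleteSpace E] {s t : ℝ} (hst : s ≤ t) {g h : ℝ →ᵃ[ℝ] ℝ}
    (hs : g s ≤ h s) (ht : g t ≤ h t) {F : ℝ → E} (hF : Continuous F) :
    ∫ q in convexHull ℝ {(s, g s), (s, h s), (t, g t), (t, h t)}, F q.1 =
      ∫ w in s..t, (h - g) w • F w := by
  have hQ : IntegrableOn (fun q : ℝ × ℝ => F q.1)
      (convexHull ℝ {(s, g s), (s, h s), (t, g t), (t, h t)}) :=
    (hF.comp continuous_fst).continuousOn.integrableOn_compact ((toFinite _).isCompact_convexHull ℝ)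
  rw [convexHull_endpoints_eq_region_between_cc s t g h hs ht, segment_eq_Icc hst,
    Measure.volume_eq_prod] at hQ ⊢
  rw [setIntegral_region_between_cc_fst g.continuous_of_finiteDimensional.measurable
      h.continuous_of_finiteDimensional.measurable measurableSet_Icc
      (fun w hw => AffineMap.apply_le_apply_of_mem_segment hs ht (by rwa [segment_eq_Icc hst]))
      hQ,
    intervalIntegral.integral_of_le hst, integral_Icc_eq_integral_Ioc]
  rfl

theorem integral_affineMap_mul_pow (φ : ℝ →ᵃ[ℝ] ℝ) (n : ℕ) {s t : ℝ} (hst : s ≠ t) :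
    ∫ w in s..t, φ w * w ^ n =
      1 / (t - s) * (1 / (n + 2) * (φ t - φ s) * (t ^ (n + 2) - s ^ (n + 2)) +
        (t * φ s - s * φ t) / (n + 1) * (t ^ (n + 1) - s ^ (n + 1))) := by
  have hts : t - s ≠ 0 := sub_ne_zero.2 hst.symm
  have hφ : ∀ w, φ w * w ^ n =
      ((t * φ s - s * φ t) * w ^ n + (φ t - φ s) * w ^ (n + 1)) / (t - s) := by
    intro w
    rw [φ.apply_eq_of_ne hst w]
    field_simp
    ring
  simp_rw [hφ]
  rw [intervalIntegral.integral_div, intervalIntegral.integral_add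
      (((continuous_pow n).intervalIntegrable s t).const_mul _)
      (((continuous_pow (n + 1)).intervalIntegrable s t).const_mul _),
    intervalIntegral.integral_const_mul, intervalIntegral.integral_const_mul,
    integral_pow, integral_pow]
  push_cast
  field_simp
  ring

theorem integral_trapezoid_general (k : ℕ) (hk : 2 ≤ k) (s t ξ₁ ξ₂ ξ₃ ξ₄ : ℝ)
    (hst : s < t) (h12 : ξ₁ ≤ ξ₂) (h34 : ξ₃ ≤ ξ₄) :
    (1 / (Nat.factorial (k - 2) : ℝ)) *
      ∫ p in convexHull ℝ ({(ξ₁, ξ₁ + s), (ξ₂, ξ₂ + s), (ξ₃, ξ₃ + t), (ξ₄, ξ₄ + t)} :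
        Set (ℝ × ℝ)), (p.2 - p.1) ^ (k - 2) =
    (1 / (Nat.factorial (k - 2) : ℝ)) * (1 / (t - s)) *
      ((1 / (k : ℝ)) * ((ξ₄ - ξ₃) - (ξ₂ - ξ₁)) * (t ^ k - s ^ k) +
        (t * (ξ₂ - ξ₁) - s * (ξ₄ - ξ₃)) / ((k : ℝ) - 1) * (t ^ (k - 1) - s ^ (k - 1))) := by
  obtain ⟨n, rfl⟩ : ∃ n, k = n + 2 := ⟨k - 2, by omega⟩
  rw [show n + 2 - 2 = n from rfl, show n + 2 - 1 = n + 1 from rfl]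
  obtain ⟨g, hgs, hgt⟩ := AffineMap.exists_apply_eq_apply_eq hst.ne ξ₁ ξ₃
  obtain ⟨h, hhs, hht⟩ := AffineMap.exists_apply_eq_apply_eq hst.ne ξ₂ ξ₄
  have hshear : (fun p : ℝ × ℝ => (p.2 - p.1, p.1)) ''
      convexHull ℝ {(ξ₁, ξ₁ + s), (ξ₂, ξ₂ + s), (ξ₃, ξ₃ + t), (ξ₄, ξ₄ + t)} =
        convexHull ℝ {(s, g s), (s, h s), (t, g t), (t, h t)} := by
    rw [show (fun p : ℝ × ℝ => (p.2 - p.1, p.1)) =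
        (LinearMap.snd ℝ ℝ ℝ - LinearMap.fst ℝ ℝ ℝ).prod (LinearMap.fst ℝ ℝ ℝ) from rfl,
      LinearMap.image_convexHull, hgs, hgt, hhs, hht]
    simp [image_insert_eq]
  have hintegral : ∫ p in convexHull ℝ ({(ξ₁, ξ₁ + s), (ξ₂, ξ₂ + s), (ξ₃, ξ₃ + t),
      (ξ₄, ξ₄ + t)} : Set (ℝ × ℝ)), (p.2 - p.1) ^ n = ∫ w in s..t, (h - g) w * w ^ n := by
    rw [Measure.volume_eq_prod, ← setIntegral_image_snd_sub_fst_fst volume volume _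
      fun q : ℝ × ℝ => q.1 ^ n, hshear, ← Measure.volume_eq_prod]
    exact setIntegral_convexHull_endpoints_fst hst.le (by rwa [hgs, hhs]) (by rwa [hgt, hht])
      (continuous_pow n)
  rw [hintegral, integral_affineMap_mul_pow (h - g) n hst.ne]
  simp only [AffineMap.coe_sub, Pi.sub_apply, hgs, hgt, hhs, hht]
  push_cast
  ring

/-- The measure of the trapezoid `Q = conv{P₁,P₂,P₄,P₃}` with `P₁ = (ξ₁, ξ₁+s)`,
`P₂ = (ξ₂, ξ₂+s)`, `P₃ = (ξ₃, ξ₃+t)`, `P₄ = (ξ₄, ξ₄+t)`, `u = ξ₂-ξ₁`, `v = ξ₄-ξ₃`: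
`(1/(k-2)!) ∬_Q (y-x)^{k-2} dx dy
  = (1/(k-2)!) (1/(t-s)) ((1/k)(v-u)(t^k - s^k) + ((tu-sv)/(k-1))(t^{k-1} - s^{k-1}))`. -/
theorem integral_trapezoid (k : ℕ) (hk : 2 ≤ k) (s t ξ₁ ξ₂ ξ₃ ξ₄ : ℝ)
    (hs : 0 ≤ s) (hst : s < t) (ht : t ≤ 1)
    (h1 : 0 ≤ ξ₁) (h12 : ξ₁ ≤ ξ₂) (h2 : ξ₂ ≤ 1 - s)
    (h3 : 0 ≤ ξ₃) (h34 : ξ₃ ≤ ξ₄) (h4 : ξ₄ ≤ 1 - t) :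
    (1 / (Nat.factorial (k - 2) : ℝ)) *
      ∫ p in convexHull ℝ ({(ξ₁, ξ₁ + s), (ξ₂, ξ₂ + s), (ξ₃, ξ₃ + t), (ξ₄, ξ₄ + t)} :
        Set (ℝ × ℝ)), (p.2 - p.1) ^ (k - 2) =
    (1 / (Nat.factorial (k - 2) : ℝ)) * (1 / (t - s)) *
      ((1 / (k : ℝ)) * ((ξ₄ - ξ₃) - (ξ₂ - ξ₁)) * (t ^ k - s ^ k) +
        (t * (ξ₂ - ξ₁) - s * (ξ₄ - ξ₃)) / ((k : ℝ) - 1) * (t ^ (k - 1) - s ^ (k - 1))) :=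
  integral_trapezoid_general k hk s t ξ₁ ξ₂ ξ₃ ξ₄ hst h12 h34
end

section
/- Let k ≥ 2 be an integer, let β ∈ (0, 1/2], and write 1 = qβ + r with q ≥ 2 an integer and 0 ≤ r < β. Let c₂ = (β^{k-1}/((q+1)·k!))·(k - (k-1)β) and c₃ = ((β-r)^k/((q+1)·k!))·q^{k-1}. If r > (q-1)/(q²+q-1), then c₂/c₃ = (β/(qβ-qr))^k · (q/β) · (k - (k-1)β) ≥ (β/(qβ-qr))^k · (k(q-1)+1)/β ≥ 6. -/
/-- For `k ≥ 2`, `β ∈ (0,1/2]`, `1 = qβ + r` with `q ≥ 2`, `0 ≤ r < β` and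
`r > (q-1)/(q²+q-1)`:
`c₂/c₃ = (β/(qβ-qr))^k · (q/β) · (k-(k-1)β) ≥ (β/(qβ-qr))^k · (k(q-1)+1)/β ≥ 6`. -/
theorem c2_div_c3_ge_six (k : ℕ) (hk : 2 ≤ k) (β : ℝ)
    (hβ : β ∈ Set.Ioc (0 : ℝ) (1 / 2)) (q : ℕ) (hq : 2 ≤ q) (r : ℝ)
    (hr0 : 0 ≤ r) (hrβ : r < β) (heq : 1 = (q : ℝ) * β + r)
    (hcase : r > ((q : ℝ) - 1) / ((q : ℝ) ^ 2 + (q : ℝ) - 1)) :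
    (β ^ (k - 1) / (((q : ℝ) + 1) * (Nat.factorial k : ℝ)) *
          ((k : ℝ) - ((k : ℝ) - 1) * β)) /
        ((β - r) ^ k / (((q : ℝ) + 1) * (Nat.factorial k : ℝ)) * (q : ℝ) ^ (k - 1)) =
      (β / ((q : ℝ) * β - (q : ℝ) * r)) ^ k * ((q : ℝ) / β) *
        ((k : ℝ) - ((k : ℝ) - 1) * β) ∧
    (β / ((q : ℝ) * β - (q : ℝ) * r)) ^ k * ((q : ℝ) / β) *
        ((k : ℝ) - ((k : ℝ) - 1) * β) ≥
      (β / ((q : ℝ) * β - (q : ℝ) * r)) ^ k * (((k : ℝ) * ((q : ℝ) - 1) + 1) / β) ∧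
    (β / ((q : ℝ) * β - (q : ℝ) * r)) ^ k * (((k : ℝ) * ((q : ℝ) - 1) + 1) / β) ≥ 6 := by
  obtain ⟨hβ0, hβh⟩ := hβ
  have hqR : (2 : ℝ) ≤ (q : ℝ) := by exact_mod_cast hq
  have hkR : (2 : ℝ) ≤ (k : ℝ) := by exact_mod_cast hk
  have hβr : 0 < β - r := by linarith
  have hD : 0 < (q : ℝ) * β - (q : ℝ) * r := by nlinarith
  have hden : (0 : ℝ) < (q : ℝ) ^ 2 + (q : ℝ) - 1 := by nlinarith
  have hA1 : 1 ≤ β / ((q : ℝ) * β - (q : ℝ) * r) := by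
    rw [le_div_iff₀ hD]
    have := (div_lt_iff₀ hden).mp hcase
    nlinarith
  have hAk : 1 ≤ (β / ((q : ℝ) * β - (q : ℝ) * r)) ^ k := one_le_pow₀ hA1
  have hqβ : (q : ℝ) * β ≤ 1 := by linarith
  refine ⟨?_, ?_, ?_⟩
  · obtain ⟨m, rfl⟩ : ∃ m, k = m + 2 := ⟨k - 2, by omega⟩
    have hfac : (0 : ℝ) < (Nat.factorial (m + 2) : ℝ) := by
      exact_mod_cast Nat.factorial_pos (m + 2)
    have hq0 : (0 : ℝ) < (q : ℝ) := by linarith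
    have hsub : m + 2 - 1 = m + 1 := rfl
    rw [hsub]
    rw [show (q:ℝ) * β - (q:ℝ) * r = (q:ℝ) * (β - r) by ring, div_pow, mul_pow]
    push_cast
    field_simp
    ring
  · have h1 : ((k : ℝ) * ((q : ℝ) - 1) + 1) / β ≤ (q : ℝ) / β * ((k : ℝ) - ((k : ℝ) - 1) * β) := by
      rw [div_mul_eq_mul_div, div_le_div_iff₀ hβ0 hβ0]
      nlinarith [mul_nonneg (mul_nonneg hβ0.le (by linarith : (0:ℝ) ≤ (k:ℝ) - 1))
        (by linarith : (0:ℝ) ≤ 1 - (q:ℝ) * β)]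
    have h2 : (0 : ℝ) ≤ (β / ((q : ℝ) * β - (q : ℝ) * r)) ^ k := by positivity
    calc (β / ((q : ℝ) * β - (q : ℝ) * r)) ^ k * ((q : ℝ) / β) * ((k : ℝ) - ((k : ℝ) - 1) * β)
        = (β / ((q : ℝ) * β - (q : ℝ) * r)) ^ k * ((q : ℝ) / β * ((k : ℝ) - ((k : ℝ) - 1) * β)) := by ring
      _ ≥ (β / ((q : ℝ) * β - (q : ℝ) * r)) ^ k * (((k : ℝ) * ((q : ℝ) - 1) + 1) / β) :=
          mul_le_mul_of_nonneg_left h1 h2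
  · have h3 : (6 : ℝ) ≤ ((k : ℝ) * ((q : ℝ) - 1) + 1) / β := by
      rw [le_div_iff₀ hβ0]
      nlinarith
    calc (β / ((q : ℝ) * β - (q : ℝ) * r)) ^ k * (((k : ℝ) * ((q : ℝ) - 1) + 1) / β)
        ≥ 1 * 6 := by
          apply mul_le_mul hAk h3 (by norm_num) (by linarith [hAk])
      _ = 6 := by norm_num
end

section
/- Let U = {β ∈ (0, 1/2] : r > (q-1)/(q²+q-1)}, where for each β the integer q ≥ 2 and the real r ∈ [0, β) are determined by 1 = qβ + r. Then the Lebesgue measure of U equals Σ_{q=2}^{∞} ( q/(q²+q-1) - 1/(q+1) ). -/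
/-- For `β ∈ (0,1/2]`, the integer `q = q(β)` with `1 = qβ + r`, `0 ≤ r < β`,
namely `q = ⌊1/β⌋`. -/
noncomputable def qf (β : ℝ) : ℕ := Nat.floor (1 / β)

/-- For `β ∈ (0,1/2]`, the remainder `r = r(β) = 1 - q(β)·β`, so that `1 = q(β)·β + r(β)`
with `0 ≤ r(β) < β`. -/
noncomputable def rf (β : ℝ) : ℝ := 1 - (qf β : ℝ) * β

/-!
If `qf β = q ≥ 1` then `β ∈ (1/(q+1), 1/q]`, and on that interval the condition
`1 - qβ > (q-1)/(q²+q-1)` says exactly `β < q/(q²+q-1)`. So `U` is the disjoint union over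
`q ≥ 2` of the intervals `(1/(q+1), q/(q²+q-1))`, and its measure is the sum of their lengths.
-/

open Set MeasureTheory

section Algebra

variable {q : ℝ}

lemma sq_add_sub_one_pos (hq : 1 ≤ q) : 0 < q ^ 2 + q - 1 := by nlinarith

lemma one_sub_mul_gt_div_iff (hq : 1 ≤ q) {β : ℝ} :
    1 - q * β > (q - 1) / (q ^ 2 + q - 1) ↔ β < q / (q ^ 2 + q - 1) := by
  have hD := sq_add_sub_one_pos hq
  rw [gt_iff_lt, div_lt_iff₀ hD, lt_div_iff₀ hD]
  constructor <;> intro h <;> nlinarith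

lemma div_sq_add_sub_one_le_one_div (hq : 1 ≤ q) : q / (q ^ 2 + q - 1) ≤ 1 / q := by
  rw [div_le_div_iff₀ (sq_add_sub_one_pos hq) (by linarith)]
  nlinarith

lemma one_div_add_one_le_div_sq_add_sub_one (hq : 1 ≤ q) :
    1 / (q + 1) ≤ q / (q ^ 2 + q - 1) := by
  rw [div_le_div_iff₀ (by linarith) (sq_add_sub_one_pos hq)]
  nlinarith

lemma div_sq_add_sub_one_sub_one_div_add_one_le (hq : 1 ≤ q) :
    q / (q ^ 2 + q - 1) - 1 / (q + 1) ≤ 1 / q ^ 2 := by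
  rw [div_sub_div _ _ (sq_add_sub_one_pos hq).ne' (by linarith),
    div_le_div_iff₀ (mul_pos (sq_add_sub_one_pos hq) (by linarith)) (by positivity)]
  nlinarith

end Algebra

lemma qf_eq_of_mem_Ioc {q : ℕ} (hq : 0 < q) {β : ℝ}
    (hβ : β ∈ Ioc (1 / ((q : ℝ) + 1)) (1 / q)) : qf β = q := by
  have hq' : (0 : ℝ) < q := by exact_mod_cast hq
  have hβ0 : 0 < β := lt_trans (by positivity) hβ.1
  obtain ⟨hlow, hupp⟩ := hβ
  rw [div_lt_iff₀ (by positivity)] at hlow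
  rw [le_div_iff₀ hq'] at hupp
  rw [qf, Nat.floor_eq_iff (by positivity), le_div_iff₀ hβ0, div_lt_iff₀ hβ0]
  constructor <;> linarith

lemma one_div_qf_add_one_lt {β : ℝ} (hβ : 0 < β) : 1 / ((qf β : ℝ) + 1) < β := by
  rw [div_lt_iff₀ (by positivity), ← div_lt_iff₀' hβ]
  exact Nat.lt_floor_add_one _

lemma two_le_qf {β : ℝ} (hβ : β ∈ Ioc 0 (1 / 2)) : 2 ≤ qf β := by
  apply Nat.le_floor
  rw [le_div_iff₀ hβ.1]
  push_cast
  linarith [hβ.2]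

/-- The part of `U` on which `qf β = q`, for `q ≥ 2`. -/
noncomputable def sliceU (q : ℕ) : Set ℝ :=
  Ioo (1 / ((q : ℝ) + 1)) (q / ((q : ℝ) ^ 2 + q - 1))

lemma sliceU_subset_Ioc {q : ℕ} (hq : 0 < q) :
    sliceU q ⊆ Ioc (1 / ((q : ℝ) + 1)) (1 / q) := fun _ hβ =>
  ⟨hβ.1, hβ.2.le.trans (div_sq_add_sub_one_le_one_div (by exact_mod_cast hq))⟩

lemma qf_eq_of_mem_sliceU {q : ℕ} (hq : 0 < q) {β : ℝ} (hβ : β ∈ sliceU q) : qf β = q :=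
  qf_eq_of_mem_Ioc hq (sliceU_subset_Ioc hq hβ)

lemma setU_eq_iUnion_sliceU :
    {β : ℝ | β ∈ Set.Ioc (0 : ℝ) (1 / 2) ∧
        rf β > ((qf β : ℝ) - 1) / ((qf β : ℝ) ^ 2 + (qf β : ℝ) - 1)} =
      ⋃ n : ℕ, sliceU (n + 2) := by
  ext β
  simp only [mem_ofPred_eq, mem_iUnion, rf]
  constructor
  · rintro ⟨hβ, hr⟩
    have hq := two_le_qf hβ
    refine ⟨qf β - 2, ?_⟩
    rw [Nat.sub_add_cancel hq]
    exact ⟨one_div_qf_add_one_lt hβ.1,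
      (one_sub_mul_gt_div_iff (by exact_mod_cast (by omega : 1 ≤ qf β))).1 hr⟩
  · rintro ⟨n, hβ⟩
    have hqf := qf_eq_of_mem_sliceU (by omega) hβ
    have hβ' := sliceU_subset_Ioc (by omega) hβ
    rw [hqf]
    refine ⟨⟨lt_trans (by positivity) hβ'.1, hβ'.2.trans ?_⟩, ?_⟩
    · gcongr
      push_cast
      linarith
    · exact (one_sub_mul_gt_div_iff (by push_cast; linarith)).2 hβ.2

lemma pairwise_disjoint_sliceU :
    Pairwise (Function.onFun Disjoint fun (n : ℕ) => sliceU (n + 2)) :=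
  fun m n hmn => disjoint_left.2 fun _ hm hn => hmn <| Nat.add_right_cancel <|
    (qf_eq_of_mem_sliceU (by omega) hm).symm.trans (qf_eq_of_mem_sliceU (by omega) hn)

lemma length_sliceU_nonneg {q : ℝ} (hq : 1 ≤ q) : 0 ≤ q / (q ^ 2 + q - 1) - 1 / (q + 1) :=
  sub_nonneg.2 (one_div_add_one_le_div_sq_add_sub_one hq)

lemma summable_length_sliceU :
    Summable fun n : ℕ => ((n : ℝ) + 2) / (((n : ℝ) + 2) ^ 2 + ((n : ℝ) + 2) - 1) -
      1 / (((n : ℝ) + 2) + 1) := by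
  have hsq : Summable fun n : ℕ => 1 / ((n : ℝ) + 2) ^ 2 := by
    simpa using (summable_nat_add_iff 2).2 (Real.summable_one_div_nat_pow.2 one_lt_two)
  exact hsq.of_nonneg_of_le (fun _ => length_sliceU_nonneg (by linarith))
    fun _ => div_sq_add_sub_one_sub_one_div_add_one_le (by linarith)

/-- The Lebesgue measure of `U = {β ∈ (0,1/2] : r(β) > (q(β)-1)/(q(β)²+q(β)-1)}` equals
`∑_{q=2}^∞ (q/(q²+q-1) - 1/(q+1))`. -/
theorem volume_U_eq :
    MeasureTheory.volume {β : ℝ | β ∈ Set.Ioc (0 : ℝ) (1 / 2) ∧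
        rf β > ((qf β : ℝ) - 1) / ((qf β : ℝ) ^ 2 + (qf β : ℝ) - 1)} =
      ENNReal.ofReal (∑' q : ℕ,
        (((q : ℝ) + 2) / (((q : ℝ) + 2) ^ 2 + ((q : ℝ) + 2) - 1) -
          1 / (((q : ℝ) + 2) + 1))) := by
  rw [setU_eq_iUnion_sliceU, measure_iUnion pairwise_disjoint_sliceU fun _ => measurableSet_Ioo,
    ENNReal.ofReal_tsum_of_nonneg (fun _ => length_sliceU_nonneg (by linarith))
      summable_length_sliceU]
  congr! 1 with n
  simp [sliceU, Real.volume_Ioo]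
end
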